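/- arXiv:2507.03805 — 5 statements merged into one kernel-verified Lean document; each statement's English description precedes it below -/
import Mathlib

section
/- Let ε : ℝ³ × {1,2} → ℝ³ be measurable and assume that for almost every k ∈ ℝ³ one has ε(k,λ) · ε(k,μ) = δ_{λμ} for all λ, μ ∈ {1,2} and k · ε(k,λ) = 0 for λ ∈ {1,2}. Define Φ : L²(ℝ³ × {1,2}; ℂ) → L²(ℝ³; ℂ³) by (Φh)(k) = Σ_{λ=1}^{2} ε(k,λ) h(k,λ). Then Φ is a linear isometry whose range equals the set 𝔳 := { v ∈ L²(ℝ³; ℂ³) : k · v(k) = 0 for almost every k ∈ ℝ³ }, and for every v in this range one has (Φ⁻¹ v)(k,λ) = ε(k,λ) · v(k) for almost every (k,λ). -/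
open MeasureTheory
open scoped RealInnerProductSpace ENNReal

/-- The measure on `ℝ³ × {1,2}` (Lebesgue times counting), the one-photon configuration
space. -/
noncomputable def photonMeasure : Measure (EuclideanSpace ℝ (Fin 3) × Fin 2) :=
  (volume : Measure (EuclideanSpace ℝ (Fin 3))).prod Measure.count

/-- The measure on `ℝ³ × {1,2,3}` (Lebesgue times counting); `L²` of it is canonically
`L²(ℝ³; ℂ³)`, with the second coordinate the vector component. -/
noncomputable def vectorFieldMeasure : Measure (EuclideanSpace ℝ (Fin 3) × Fin 3) :=
  (volume : Measure (EuclideanSpace ℝ (Fin 3))).prod Measure.count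

/-!
For a.e. `k` the matrix `E(k)` with columns `ε(k,1), ε(k,2)` satisfies `E(k)ᴴ E(k) = 1`, so
multiplying each fibre `h(k, ·)` by `E(k)` preserves its `ℓ²` norm, hence the `L²` norm, and
`E(k)ᴴ` undoes it. Adding the column `k / ‖k‖` makes `E(k)` square with orthonormal columns,
hence unitary, which gives `E Eᴴ + k kᵀ / ‖k‖² = 1`: the fibrewise projection `E Eᴴ` fixes
exactly the vectors orthogonal to `k`, and these are the fibres of the range.
-/

open Matrix Function

namespace MeasureTheory.Measure

variable {X ι : Type*} [MeasurableSpace X] {μ : Measure X} [SFinite μ] [MeasurableSpace ι]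

theorem prod_count_eq_sum_map [Countable ι] :
    μ.prod (count : Measure ι) = sum fun i => μ.map (·, i) := by
  rw [count, prod_sum_right]
  simp_rw [prod_dirac]

theorem ae_prod_count_iff [Countable ι] [MeasurableSingletonClass ι] {P : X × ι → Prop} :
    (∀ᵐ p ∂μ.prod (count : Measure ι), P p) ↔ ∀ᵐ x ∂μ, ∀ i, P (x, i) := by
  rw [prod_count_eq_sum_map, ae_sum_iff, ae_all_iff]
  exact forall_congr' fun i => (MeasurableEmbedding.id.prodMk_right i).ae_map_iff

theorem ae_eq_prod_count_iff [Countable ι] [MeasurableSingletonClass ι] {Y : Type*}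
    {f g : X × ι → Y} :
    f =ᵐ[μ.prod (count : Measure ι)] g ↔ ∀ᵐ x ∂μ, curry f x = curry g x := by
  simp only [Filter.EventuallyEq, funext_iff, curry_apply]
  exact ae_prod_count_iff

theorem aestronglyMeasurable_prod_count_iff [Countable ι] [MeasurableSingletonClass ι]
    {E : Type*} [TopologicalSpace E] [TopologicalSpace.PseudoMetrizableSpace E]
    {f : X × ι → E} :
    AEStronglyMeasurable f (μ.prod (count : Measure ι)) ↔
      ∀ i, AEStronglyMeasurable (fun x => f (x, i)) μ := by
  rw [prod_count_eq_sum_map, aestronglyMeasurable_sum_measure_iff]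
  exact forall_congr' fun i => (MeasurableEmbedding.id.prodMk_right i).aestronglyMeasurable_map_iff

theorem lintegral_prod_count [Fintype ι] [MeasurableSingletonClass ι] (f : X × ι → ℝ≥0∞) :
    ∫⁻ p, f p ∂μ.prod (count : Measure ι) = ∑ i, ∫⁻ x, f (x, i) ∂μ := by
  rw [prod_count_eq_sum_map, lintegral_sum_measure, tsum_fintype]
  exact Finset.sum_congr rfl fun i _ => (MeasurableEmbedding.id.prodMk_right i).lintegral_map f

end MeasureTheory.Measure

namespace Matrix

section CommRing

variable {R m n : Type*} [CommRing R] [StarRing R] [Fintype m] [Fintype n] [DecidableEq m]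
  [DecidableEq n]

theorem mul_conjTranspose_add_vecMulVec_eq_one (hcard : Fintype.card n = Fintype.card m + 1)
    {E : Matrix n m R} {u : n → R} (hE : Eᴴ * E = 1) (hEu : Eᴴ *ᵥ u = 0)
    (hu : star u ⬝ᵥ u = 1) :
    E * Eᴴ + vecMulVec u (star u) = 1 := by
  set U := replicateCol Unit u
  have hEU : Eᴴ * U = 0 := by rw [← replicateCol_mulVec, hEu, replicateCol_zero]
  have hUE : Uᴴ * E = 0 := by
    rw [← conjTranspose_conjTranspose E, ← conjTranspose_mul, hEU, conjTranspose_zero]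
  have hUU : Uᴴ * U = 1 := by
    rw [conjTranspose_replicateCol, replicateRow_mul_replicateCol, hu]
    ext; rfl
  -- `fromCols E U` is square with orthonormal columns, so its rows are orthonormal as well.
  have hsq : (fromCols E U)ᴴ * fromCols E U = 1 := by
    rw [conjTranspose_fromCols_eq_fromRows_conjTranspose, fromRows_mul_fromCols, hE, hEU, hUE,
      hUU, fromBlocks_one]
  rw [conjTranspose_fromCols_eq_fromRows_conjTranspose, ← fromCols_mul_fromRows_eq_one_comm
    (Fintype.equivOfCardEq (by simpa using hcard)), fromCols_mul_fromRows] at hsq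
  rwa [vecMulVec_eq Unit, ← conjTranspose_replicateCol]

end CommRing

section RCLike

variable {𝕜 m n : Type*} [RCLike 𝕜] [Fintype m] [Fintype n]

theorem ofReal_sum_norm_sq_eq_dotProduct_star (w : n → 𝕜) :
    ((∑ i, ‖w i‖ ^ 2 : ℝ) : 𝕜) = w ⬝ᵥ star w := by
  push_cast
  simp_rw [← RCLike.mul_conj]
  rfl

theorem sum_enorm_sq_mulVec_of_conjTranspose_mul_self [DecidableEq n] {M : Matrix m n 𝕜}
    (hM : Mᴴ * M = 1) (c : n → 𝕜) : ∑ i, ‖(M *ᵥ c) i‖ₑ ^ 2 = ∑ j, ‖c j‖ₑ ^ 2 := by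
  have h : ∑ i, ‖(M *ᵥ c) i‖ ^ 2 = ∑ j, ‖c j‖ ^ 2 := by
    apply RCLike.ofReal_injective (K := 𝕜)
    rw [ofReal_sum_norm_sq_eq_dotProduct_star, ofReal_sum_norm_sq_eq_dotProduct_star]
    calc (M *ᵥ c) ⬝ᵥ star (M *ᵥ c) = (star c ᵥ* Mᴴ) ⬝ᵥ (M *ᵥ c) := by
          rw [dotProduct_comm, star_mulVec]
      _ = star c ⬝ᵥ c := by rw [← dotProduct_mulVec, mulVec_mulVec, hM, one_mulVec]
      _ = c ⬝ᵥ star c := dotProduct_comm _ _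
  have := congrArg ENNReal.ofReal h
  rw [ENNReal.ofReal_sum_of_nonneg fun _ _ => by positivity,
    ENNReal.ofReal_sum_of_nonneg fun _ _ => by positivity] at this
  simpa only [ENNReal.ofReal_pow (norm_nonneg _), ofReal_norm] using this

end RCLike

section OfRealColumns

variable {n ι : Type*} [Fintype n]

noncomputable def ofRealColumns (a : ι → EuclideanSpace ℝ n) : Matrix n ι ℂ :=
  of fun i l => (a l i : ℂ)

theorem _root_.EuclideanSpace.ofReal_inner_eq_dotProduct (x y : EuclideanSpace ℝ n) :
    ((⟪x, y⟫ : ℝ) : ℂ) = (fun i => (x i : ℂ)) ⬝ᵥ fun i => (y i : ℂ) := by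
  simp [EuclideanSpace.inner_eq_star_dotProduct, dotProduct, mul_comm]

theorem conjTranspose_ofRealColumns_mul_self [DecidableEq ι] {a : ι → EuclideanSpace ℝ n}
    (ha : Orthonormal ℝ a) : (ofRealColumns a)ᴴ * ofRealColumns a = 1 := by
  ext l m
  have := congrArg (fun r : ℝ => (r : ℂ)) (orthonormal_iff_ite.1 ha l m)
  simpa [EuclideanSpace.ofReal_inner_eq_dotProduct, mul_apply, one_apply, ofRealColumns,
    dotProduct, apply_ite] using this

theorem conjTranspose_ofRealColumns_mulVec {a : ι → EuclideanSpace ℝ n}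
    (x : EuclideanSpace ℝ n) :
    (ofRealColumns a)ᴴ *ᵥ (fun i => (x i : ℂ)) = fun l => ((⟪a l, x⟫ : ℝ) : ℂ) := by
  ext l
  simp [EuclideanSpace.ofReal_inner_eq_dotProduct, mulVec, ofRealColumns, dotProduct]

variable [Fintype ι]

theorem dotProduct_ofRealColumns_mulVec {a : ι → EuclideanSpace ℝ n} {k : EuclideanSpace ℝ n}
    (hk : ∀ l, ⟪k, a l⟫ = 0) (c : ι → ℂ) :
    (fun i => (k i : ℂ)) ⬝ᵥ ofRealColumns a *ᵥ c = 0 := by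
  rw [dotProduct_mulVec]
  convert zero_dotProduct c
  ext l
  simpa [vecMul, ofRealColumns, EuclideanSpace.ofReal_inner_eq_dotProduct] using
    congrArg ((↑) : ℝ → ℂ) (hk l)

theorem ofRealColumns_mulVec_conjTranspose_mulVec [DecidableEq n] [DecidableEq ι]
    (hcard : Fintype.card n = Fintype.card ι + 1) {a : ι → EuclideanSpace ℝ n}
    (ha : Orthonormal ℝ a) {k : EuclideanSpace ℝ n} (hk : ∀ l, ⟪k, a l⟫ = 0) (hk0 : k ≠ 0)
    {v : n → ℂ} (hv : (fun i => (k i : ℂ)) ⬝ᵥ v = 0) :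
    ofRealColumns a *ᵥ (ofRealColumns a)ᴴ *ᵥ v = v := by
  set u : n → ℂ := ((‖k‖⁻¹ : ℝ) : ℂ) • fun i => (k i : ℂ)
  have hu_star : star u = u := by ext i; simp [u]
  have hEu : (ofRealColumns a)ᴴ *ᵥ u = 0 := by
    ext l
    simp [u, mulVec_smul, conjTranspose_ofRealColumns_mulVec, real_inner_comm, hk]
  have hu : star u ⬝ᵥ u = 1 := by
    have hk' : (‖k‖ : ℂ) ≠ 0 := by exact_mod_cast norm_ne_zero_iff.2 hk0
    rw [hu_star]
    rw [smul_dotProduct, dotProduct_smul, ← EuclideanSpace.ofReal_inner_eq_dotProduct,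
      real_inner_self_eq_norm_sq, smul_eq_mul, smul_eq_mul]
    push_cast
    field_simp
  have hv' : star u ⬝ᵥ v = 0 := by rw [hu_star, smul_dotProduct, hv, smul_zero]
  have := congrArg (· *ᵥ v) (mul_conjTranspose_add_vecMulVec_eq_one hcard
    (conjTranspose_ofRealColumns_mul_self ha) hEu hu)
  rwa [add_mulVec, one_mulVec, vecMulVec_mulVec, hv', MulOpposite.op_zero, zero_smul, add_zero,
    ← mulVec_mulVec] at this

end OfRealColumns

end Matrix

open MeasureTheory.Measure

namespace MeasureTheory

section Algebra

variable {X ι κ R : Type*} [Fintype ι] [CommSemiring R] (M : X → Matrix κ ι R)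

def fiberwiseMulVec (f : X × ι → R) : X × κ → R :=
  uncurry fun x => M x *ᵥ curry f x

@[simp]
theorem curry_fiberwiseMulVec (f : X × ι → R) (x : X) :
    curry (fiberwiseMulVec M f) x = M x *ᵥ curry f x :=
  rfl

theorem fiberwiseMulVec_add (f g : X × ι → R) :
    fiberwiseMulVec M (f + g) = fiberwiseMulVec M f + fiberwiseMulVec M g := by
  ext ⟨x, i⟩
  exact congrFun (mulVec_add (M x) (curry f x) (curry g x)) i

theorem fiberwiseMulVec_smul (c : R) (f : X × ι → R) :
    fiberwiseMulVec M (c • f) = c • fiberwiseMulVec M f := by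
  ext ⟨x, i⟩
  exact congrFun (mulVec_smul (M x) c (curry f x)) i

end Algebra

variable {X ι κ 𝕜 : Type*} [MeasurableSpace X] {μ : Measure X} [SFinite μ]
  [Fintype ι] [MeasurableSpace ι] [MeasurableSingletonClass ι]
  [Fintype κ] [MeasurableSpace κ] [MeasurableSingletonClass κ]

theorem lintegral_enorm_sq_prod_count {E : Type*} [NormedAddCommGroup E] {f : X × ι → E}
    (hf : AEStronglyMeasurable f (μ.prod count)) :
    ∫⁻ p, ‖f p‖ₑ ^ 2 ∂μ.prod count = ∫⁻ x, ∑ i, ‖f (x, i)‖ₑ ^ 2 ∂μ := by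
  rw [lintegral_prod_count, lintegral_finsetSum' _ fun i _ =>
    ((aestronglyMeasurable_prod_count_iff.1 hf i).enorm.pow_const 2)]

theorem eLpNorm_two_prod_count_eq {E F : Type*} [NormedAddCommGroup E] [NormedAddCommGroup F]
    {f : X × ι → E} {g : X × κ → F} (hf : AEStronglyMeasurable f (μ.prod count))
    (hg : AEStronglyMeasurable g (μ.prod count))
    (hfg : ∀ᵐ x ∂μ, ∑ i, ‖f (x, i)‖ₑ ^ 2 = ∑ j, ‖g (x, j)‖ₑ ^ 2) :
    eLpNorm f 2 (μ.prod count) = eLpNorm g 2 (μ.prod count) := by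
  simp only [eLpNorm_eq_lintegral_rpow_enorm_toReal two_ne_zero ENNReal.ofNat_ne_top,
    ENNReal.toReal_ofNat, ENNReal.rpow_two]
  rw [lintegral_enorm_sq_prod_count hf, lintegral_enorm_sq_prod_count hg, lintegral_congr_ae hfg]

variable [RCLike 𝕜] {M : X → Matrix κ ι 𝕜}

theorem fiberwiseMulVec_congr_ae {f g : X × ι → 𝕜} (hfg : f =ᵐ[μ.prod count] g) :
    fiberwiseMulVec M f =ᵐ[μ.prod count] fiberwiseMulVec M g := by
  rw [ae_eq_prod_count_iff] at hfg ⊢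
  filter_upwards [hfg] with x hx
  rw [curry_fiberwiseMulVec, curry_fiberwiseMulVec, hx]

theorem AEStronglyMeasurable.fiberwiseMulVec
    (hM : ∀ i j, AEStronglyMeasurable (fun x => M x i j) μ) {f : X × ι → 𝕜}
    (hf : AEStronglyMeasurable f (μ.prod count)) :
    AEStronglyMeasurable (fiberwiseMulVec M f) (μ.prod count) := by
  rw [aestronglyMeasurable_prod_count_iff] at hf ⊢
  exact fun i => Finset.aestronglyMeasurable_fun_sum _ fun j _ => (hM i j).mul (hf j)

variable [DecidableEq ι] (M) (hM : ∀ i j, AEStronglyMeasurable (fun x => M x i j) μ)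
  (hMM : ∀ᵐ x ∂μ, (M x)ᴴ * M x = 1)
include hM hMM

theorem eLpNorm_fiberwiseMulVec {f : X × ι → 𝕜} (hf : AEStronglyMeasurable f (μ.prod count)) :
    eLpNorm (fiberwiseMulVec M f) 2 (μ.prod count) = eLpNorm f 2 (μ.prod count) := by
  refine eLpNorm_two_prod_count_eq (hf.fiberwiseMulVec hM) hf ?_
  filter_upwards [hMM] with x hx
  exact sum_enorm_sq_mulVec_of_conjTranspose_mul_self hx (curry f x)

theorem MemLp.fiberwiseMulVec {f : X × ι → 𝕜} (hf : MemLp f 2 (μ.prod count)) :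
    MemLp (fiberwiseMulVec M f) 2 (μ.prod count) :=
  ⟨hf.1.fiberwiseMulVec hM, (eLpNorm_fiberwiseMulVec M hM hMM hf.1).symm ▸ hf.2⟩

noncomputable def fiberwiseMulVecLp :
    Lp 𝕜 2 (μ.prod (count : Measure ι)) →ₗᵢ[𝕜] Lp 𝕜 2 (μ.prod (count : Measure κ)) where
  toFun h := ((Lp.memLp h).fiberwiseMulVec M hM hMM).toLp
  map_add' h g := by
    refine (MemLp.toLp_congr _ _ ?_).trans (MemLp.toLp_add _ _)
    rw [← fiberwiseMulVec_add]
    exact fiberwiseMulVec_congr_ae (Lp.coeFn_add h g)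
  map_smul' c h := by
    refine (MemLp.toLp_congr _ _ ?_).trans (MemLp.toLp_const_smul _ _)
    rw [← fiberwiseMulVec_smul]
    exact fiberwiseMulVec_congr_ae (Lp.coeFn_smul c h)
  norm_map' h := by
    rw [LinearMap.coe_mk, AddHom.coe_mk, Lp.norm_toLp, Lp.norm_def,
      eLpNorm_fiberwiseMulVec M hM hMM (Lp.aestronglyMeasurable h)]

theorem coeFn_fiberwiseMulVecLp (h : Lp 𝕜 2 (μ.prod (count : Measure ι))) :
    fiberwiseMulVecLp M hM hMM h =ᵐ[μ.prod count] fiberwiseMulVec M h :=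
  MemLp.coeFn_toLp ((Lp.memLp h).fiberwiseMulVec M hM hMM)

theorem ae_eq_fiberwiseMulVec_conjTranspose_fiberwiseMulVecLp
    (h : Lp 𝕜 2 (μ.prod (count : Measure ι))) :
    h =ᵐ[μ.prod count] fiberwiseMulVec (fun x => (M x)ᴴ) (fiberwiseMulVecLp M hM hMM h) := by
  have hΦ := ae_eq_prod_count_iff.1 (coeFn_fiberwiseMulVecLp M hM hMM h)
  rw [ae_eq_prod_count_iff]
  filter_upwards [hΦ, hMM] with x hx hxM
  rw [curry_fiberwiseMulVec, hx, curry_fiberwiseMulVec, mulVec_mulVec, hxM, one_mulVec]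

theorem mem_range_fiberwiseMulVecLp_iff (v : Lp 𝕜 2 (μ.prod (count : Measure κ))) :
    v ∈ Set.range (fiberwiseMulVecLp M hM hMM) ↔
      ∀ᵐ x ∂μ, M x *ᵥ (M x)ᴴ *ᵥ curry v x = curry v x := by
  constructor
  · rintro ⟨h, rfl⟩
    filter_upwards [ae_eq_prod_count_iff.1 (coeFn_fiberwiseMulVecLp M hM hMM h), hMM]
      with x hx hxM
    rw [hx, curry_fiberwiseMulVec, mulVec_mulVec _ (M x)ᴴ, hxM, one_mulVec]
  · intro hv
    have hMH : ∀ j i, AEStronglyMeasurable (fun x => (M x)ᴴ j i) μ := fun j i =>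
      RCLike.continuous_conj.comp_aestronglyMeasurable (hM i j)
    have hv_meas := Lp.aestronglyMeasurable v
    -- `Mᴴ v` has the fibre norms of `M Mᴴ v = v`.
    have hw : MemLp (fiberwiseMulVec (fun x => (M x)ᴴ) v) 2 (μ.prod count) := by
      refine ⟨hv_meas.fiberwiseMulVec hMH, ?_⟩
      rw [eLpNorm_two_prod_count_eq (hv_meas.fiberwiseMulVec hMH) hv_meas ?_]
      · exact Lp.eLpNorm_lt_top v
      filter_upwards [hMM, hv] with x hxM hxv
      rw [← sum_enorm_sq_mulVec_of_conjTranspose_mul_self hxM]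
      exact congrArg (fun w => ∑ i, ‖w i‖ₑ ^ 2) hxv
    refine ⟨hw.toLp, Lp.ext ((coeFn_fiberwiseMulVecLp M hM hMM _).trans ?_)⟩
    exact (fiberwiseMulVec_congr_ae (MemLp.coeFn_toLp hw)).trans (ae_eq_prod_count_iff.2 hv)

end MeasureTheory

/-- Given measurable polarization vectors `ε(·,1), ε(·,2)` which are a.e.
orthonormal and transversal, the map `(Φh)(k) = ∑_λ ε(k,λ) h(k,λ)` is a linear isometry of
`L²(ℝ³ × {1,2})` onto the space of divergence-free (in momentum space: transversal) square
integrable vector fields, with inverse `(Φ⁻¹v)(k,λ) = ε(k,λ)·v(k)`. -/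
theorem polarization_identification
    (ε : EuclideanSpace ℝ (Fin 3) × Fin 2 → EuclideanSpace ℝ (Fin 3))
    (hmeas : Measurable ε)
    (hε : ∀ᵐ k ∂(volume : Measure (EuclideanSpace ℝ (Fin 3))),
      (∀ l m : Fin 2, ⟪ε (k, l), ε (k, m)⟫ = if l = m then (1 : ℝ) else 0) ∧
      ∀ l : Fin 2, ⟪k, ε (k, l)⟫ = 0) :
    ∃ Φ : Lp ℂ 2 photonMeasure →ₗᵢ[ℂ] Lp ℂ 2 vectorFieldMeasure,
      (∀ h : Lp ℂ 2 photonMeasure,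
        (Φ h : EuclideanSpace ℝ (Fin 3) × Fin 3 → ℂ)
          =ᵐ[vectorFieldMeasure]
            fun p => ∑ l : Fin 2, ((ε (p.1, l) p.2 : ℝ) : ℂ) * h (p.1, l)) ∧
      {v : Lp ℂ 2 vectorFieldMeasure | ∃ h, Φ h = v}
        = {v : Lp ℂ 2 vectorFieldMeasure |
            ∀ᵐ k ∂(volume : Measure (EuclideanSpace ℝ (Fin 3))),
              ∑ i : Fin 3, ((k i : ℝ) : ℂ) * v (k, i) = 0} ∧
      ∀ (h : Lp ℂ 2 photonMeasure) (v : Lp ℂ 2 vectorFieldMeasure), Φ h = v →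
        (h : EuclideanSpace ℝ (Fin 3) × Fin 2 → ℂ)
          =ᵐ[photonMeasure]
            fun p => ∑ i : Fin 3, ((ε p i : ℝ) : ℂ) * v (p.1, i) := by
  have hM : ∀ i l, AEStronglyMeasurable (fun k => ofRealColumns (curry ε k) i l) volume :=
    fun i l => by
      refine Measurable.aestronglyMeasurable ?_
      simp only [ofRealColumns, of_apply, curry_apply]
      fun_prop
  have hfib : ∀ᵐ k ∂(volume : Measure (EuclideanSpace ℝ (Fin 3))),
      Orthonormal ℝ (curry ε k) ∧ (∀ l, ⟪k, curry ε k l⟫ = 0) ∧ k ≠ 0 := by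
    filter_upwards [hε, Measure.ae_ne volume 0] with k hk hk0
    exact ⟨orthonormal_iff_ite.2 hk.1, hk.2, hk0⟩
  have hMM : ∀ᵐ k ∂volume, (ofRealColumns (curry ε k))ᴴ * ofRealColumns (curry ε k) = 1 :=
    hfib.mono fun k hk => conjTranspose_ofRealColumns_mul_self hk.1
  refine ⟨fiberwiseMulVecLp _ hM hMM, coeFn_fiberwiseMulVecLp _ hM hMM, ?_, ?_⟩
  · ext v
    refine (mem_range_fiberwiseMulVecLp_iff _ hM hMM v).trans (Filter.eventually_congr ?_)
    filter_upwards [hfib] with k ⟨ha, hk, hk0⟩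
    refine ⟨fun hv => ?_, ofRealColumns_mulVec_conjTranspose_mulVec (by simp) ha hk hk0⟩
    exact (congrArg _ hv.symm).trans (dotProduct_ofRealColumns_mulVec hk _)
  · rintro h v rfl
    refine (ae_eq_fiberwiseMulVec_conjTranspose_fiberwiseMulVecLp _ hM hMM h).trans
      (Filter.Eventually.of_forall fun ⟨k, l⟩ => ?_)
    simp only [fiberwiseMulVec, ofRealColumns, curry_apply, uncurry_apply_pair, mulVec,
      dotProduct, conjTranspose_apply, of_apply, RCLike.star_def, Complex.conj_ofReal]
    -- the two sides differ only in the spelling `vectorFieldMeasure` vs `volume.prod count`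
    rfl
end

section
/- Let H be a complex inner product space, let T : H → H satisfy ⟨T x, T y⟩ = conj(⟨x, y⟩) for all x, y ∈ H and T(T x) = −x for all x ∈ H, and let A : H → H be a linear map commuting with T, i.e., A ∘ T = T ∘ A. If E ∈ ℝ and ψ ∈ H is a nonzero vector with A ψ = E ψ, then T ψ is also a nonzero vector with A (T ψ) = E (T ψ) and ⟨ψ, T ψ⟩ = 0; in particular the eigenspace of A for the eigenvalue E has dimension at least two. -/
/-!
An antiunitary `T` preserves norms and, even without being assumed surjective, is conjugate
linear; hence it maps an eigenvector of a `T`-commuting operator for a real eigenvalue to a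
nonzero eigenvector for the same eigenvalue. If moreover `T² = -1`, then
`⟪T x, x⟫ = conj ⟪x, T x⟫ = ⟪T x, T (T x)⟫ = -⟪T x, x⟫`, so `x` and `T x` are orthogonal and
span a two-dimensional subspace of the eigenspace.
-/

open scoped ComplexInnerProductSpace

section Antiunitary

open scoped InnerProductSpace ComplexConjugate

variable {𝕜 E : Type*} [RCLike 𝕜] [NormedAddCommGroup E] [InnerProductSpace 𝕜 E] {T : E → E}

-- `‖T (c • x) - conj c • T x‖²` expands into inner products of images under `T`.
theorem map_smul_of_inner_map_map_eq_conj (hT : ∀ x y, ⟪T x, T y⟫_𝕜 = conj ⟪x, y⟫_𝕜)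
    (c : 𝕜) (x : E) : T (c • x) = conj c • T x := by
  rw [← sub_eq_zero, ← inner_self_eq_zero (𝕜 := 𝕜)]
  simp only [inner_sub_left, inner_sub_right, inner_smul_left, inner_smul_right, hT,
    map_mul, RCLike.conj_conj]
  ring

theorem norm_map_of_inner_map_map_eq_conj (hT : ∀ x y, ⟪T x, T y⟫_𝕜 = conj ⟪x, y⟫_𝕜)
    (x : E) : ‖T x‖ = ‖x‖ := by
  rw [norm_eq_sqrt_re_inner (𝕜 := 𝕜), norm_eq_sqrt_re_inner (𝕜 := 𝕜), hT, RCLike.conj_re]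

theorem inner_self_map_eq_zero (hT : ∀ x y, ⟪T x, T y⟫_𝕜 = conj ⟪x, y⟫_𝕜)
    (hT2 : ∀ x, T (T x) = -x) (x : E) : ⟪x, T x⟫_𝕜 = 0 := by
  rw [inner_eq_zero_symm]
  have h := hT x (T x)
  rw [hT2, inner_neg_right, inner_conj_symm] at h
  linear_combination (-1 / 2 : 𝕜) * h

theorem two_le_rank_of_inner_eq_zero {K : Submodule 𝕜 E} {x y : E} (hxK : x ∈ K) (hyK : y ∈ K)
    (hx : x ≠ 0) (hy : y ≠ 0) (hxy : ⟪x, y⟫_𝕜 = 0) : 2 ≤ Module.rank 𝕜 K := by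
  have hli : LinearIndependent 𝕜 ![(⟨x, hxK⟩ : K), ⟨y, hyK⟩] := by
    refine linearIndependent_of_ne_zero_of_inner_eq_zero ?_ ?_
    · intro i; fin_cases i <;> simpa
    · intro i j hij
      fin_cases i <;> fin_cases j <;> simp_all [inner_eq_zero_symm]
  simpa using hli.cardinal_lift_le_rank

end Antiunitary

/-- Kramers degeneracy. If `T` is antiunitary with `T² = -1` and `A` is a
linear operator commuting with `T`, then for any nonzero eigenvector `ψ` of `A` with real
eigenvalue `E`, the vector `Tψ` is a nonzero eigenvector for the same eigenvalue, orthogonal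
to `ψ`; in particular the eigenspace has dimension at least two. -/
theorem kramers_degeneracy
    {H : Type*} [NormedAddCommGroup H] [InnerProductSpace ℂ H]
    (T : H → H)
    (hT : ∀ x y : H, ⟪T x, T y⟫ = (starRingEnd ℂ) ⟪x, y⟫)
    (hT2 : ∀ x : H, T (T x) = -x)
    (A : H →ₗ[ℂ] H)
    (hcomm : ∀ x : H, A (T x) = T (A x))
    (E : ℝ) (ψ : H) (hψ : ψ ≠ 0) (heig : A ψ = (E : ℂ) • ψ) :
    T ψ ≠ 0 ∧ A (T ψ) = (E : ℂ) • T ψ ∧ ⟪ψ, T ψ⟫ = 0 ∧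
      2 ≤ Module.rank ℂ (LinearMap.ker (A - (E : ℂ) • LinearMap.id)) := by
  have hTψ : T ψ ≠ 0 := by
    rwa [← norm_ne_zero_iff, norm_map_of_inner_map_map_eq_conj hT, norm_ne_zero_iff]
  have hTeig : A (T ψ) = (E : ℂ) • T ψ := by
    rw [hcomm, heig, map_smul_of_inner_map_map_eq_conj hT, Complex.conj_ofReal]
  have horth : ⟪ψ, T ψ⟫ = 0 := inner_self_map_eq_zero hT hT2 ψ
  refine ⟨hTψ, hTeig, horth, two_le_rank_of_inner_eq_zero ?_ ?_ hψ hTψ horth⟩ <;>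
    simp [heig, hTeig]
end

section
/- Let H be a complex inner product space, let T : H → H satisfy ⟨T x, T y⟩ = conj(⟨x, y⟩) for all x, y ∈ H and T(T x) = −x for all x ∈ H. Let V ⊆ H be a complex linear subspace of dimension exactly 2 that is invariant under T (i.e., T(V) ⊆ V). Then every complex linear subspace W ⊆ V with T(W) ⊆ W and W ≠ {0} satisfies W = V; that is, T acts irreducibly on V. -/
/-!
For an antiunitary `T` with `T² = -1`, `⟪T x, x⟫ = conj ⟪x, T x⟫ = ⟪T x, T (T x)⟫ = -⟪T x, x⟫`,
so every `x ≠ 0` is orthogonal to `T x ≠ 0`. Hence a nonzero `T`-invariant subspace contains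
two independent vectors, and inside a two-dimensional `V` it must be all of `V`.
-/

open scoped InnerProductSpace

section Antiunitary

variable {𝕜 H : Type*} [RCLike 𝕜] [NormedAddCommGroup H] [InnerProductSpace 𝕜 H] {T : H → H}

theorem apply_eq_zero_iff_of_inner_map_map_eq_conj
    (hT : ∀ x y, ⟪T x, T y⟫_𝕜 = starRingEnd 𝕜 ⟪x, y⟫_𝕜) {x : H} : T x = 0 ↔ x = 0 := by
  rw [← inner_self_eq_zero (𝕜 := 𝕜), hT, map_eq_zero, inner_self_eq_zero]

theorem inner_apply_self_eq_zero_of_antiunitary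
    (hT : ∀ x y, ⟪T x, T y⟫_𝕜 = starRingEnd 𝕜 ⟪x, y⟫_𝕜) (hT2 : ∀ x, T (T x) = -x) (x : H) :
    ⟪T x, x⟫_𝕜 = 0 := by
  have h : ⟪T x, x⟫_𝕜 = -⟪T x, x⟫_𝕜 := calc
    ⟪T x, x⟫_𝕜 = starRingEnd 𝕜 ⟪x, T x⟫_𝕜 := (inner_conj_symm _ _).symm
    _ = ⟪T x, T (T x)⟫_𝕜 := (hT x (T x)).symm
    _ = -⟪T x, x⟫_𝕜 := by rw [hT2, inner_neg_right]
  exact self_eq_neg.mp h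

theorem linearIndependent_pair_apply_of_antiunitary
    (hT : ∀ x y, ⟪T x, T y⟫_𝕜 = starRingEnd 𝕜 ⟪x, y⟫_𝕜) (hT2 : ∀ x, T (T x) = -x) {x : H}
    (hx : x ≠ 0) : LinearIndependent 𝕜 ![x, T x] := by
  have hTx : ⟪T x, x⟫_𝕜 = 0 := inner_apply_self_eq_zero_of_antiunitary hT hT2 x
  have hxT : ⟪x, T x⟫_𝕜 = 0 := by rw [← inner_conj_symm, hTx, map_zero]
  refine linearIndependent_of_ne_zero_of_inner_eq_zero ?_ fun i j hij => ?_
  · simpa [Fin.forall_fin_two, apply_eq_zero_iff_of_inner_map_map_eq_conj hT] using hx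
  · fin_cases i <;> fin_cases j <;> simp_all

theorem two_le_finrank_of_antiunitary_invariant
    (hT : ∀ x y, ⟪T x, T y⟫_𝕜 = starRingEnd 𝕜 ⟪x, y⟫_𝕜) (hT2 : ∀ x, T (T x) = -x)
    {W : Submodule 𝕜 H} [FiniteDimensional 𝕜 W] (hW : ∀ x ∈ W, T x ∈ W) (hW0 : W ≠ ⊥) :
    2 ≤ Module.finrank 𝕜 W := by
  obtain ⟨x, hxW, hx⟩ := W.exists_mem_ne_zero_of_ne_bot hW0
  have hspan : Submodule.span 𝕜 (Set.range ![x, T x]) ≤ W := by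
    rw [Submodule.span_le, Matrix.range_cons_cons_empty, Set.pair_subset_iff]
    exact ⟨hxW, hW x hxW⟩
  calc 2 = Module.finrank 𝕜 (Submodule.span 𝕜 (Set.range ![x, T x])) := by
        rw [finrank_span_eq_card (linearIndependent_pair_apply_of_antiunitary hT hT2 hx),
          Fintype.card_fin]
    _ ≤ Module.finrank 𝕜 W := Submodule.finrank_mono hspan

end Antiunitary

open scoped ComplexInnerProductSpace

theorem kramers_irreducibility_general
    {H : Type*} [NormedAddCommGroup H] [InnerProductSpace ℂ H]
    (T : H → H)
    (hT : ∀ x y : H, ⟪T x, T y⟫ = (starRingEnd ℂ) ⟪x, y⟫)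
    (hT2 : ∀ x : H, T (T x) = -x)
    (V : Submodule ℂ H)
    (hdim : Module.finrank ℂ V = 2) :
    ∀ W : Submodule ℂ H, W ≤ V → (∀ x ∈ W, T x ∈ W) → W ≠ ⊥ → W = V := by
  intro W hWV hW hW0
  have : FiniteDimensional ℂ V := Module.finite_of_finrank_eq_succ hdim
  have : FiniteDimensional ℂ W := Submodule.finiteDimensional_of_le hWV
  refine Submodule.eq_of_le_of_finrank_le hWV ?_
  rw [hdim]
  exact two_le_finrank_of_antiunitary_invariant hT hT2 hW hW0

/-- Kramers irreducibility. If `T` is antiunitary with `T² = -1` and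
`V` is a two-dimensional complex subspace invariant under `T`, then any nonzero
`T`-invariant subspace of `V` equals `V`, i.e. `T` acts irreducibly on `V`. -/
theorem kramers_irreducibility
    {H : Type*} [NormedAddCommGroup H] [InnerProductSpace ℂ H]
    (T : H → H)
    (hT : ∀ x y : H, ⟪T x, T y⟫ = (starRingEnd ℂ) ⟪x, y⟫)
    (hT2 : ∀ x : H, T (T x) = -x)
    (V : Submodule ℂ H)
    (hdim : Module.finrank ℂ V = 2)
    (hinv : ∀ x ∈ V, T x ∈ V) :
    ∀ W : Submodule ℂ H, W ≤ V → (∀ x ∈ W, T x ∈ W) → W ≠ ⊥ → W = V :=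
  kramers_irreducibility_general T hT hT2 V hdim
end

section
/- Let d > ρ > 0, θ₀ ∈ (0, π/2), and let θ ∈ ℂ with |Im θ| ≤ θ₀, and z ∈ ℂ with |z| < ρ. Then for every real t ≥ d and every real q ≥ 0 one has e^θ t − e^θ z + q ≠ 0 and (q + 1) / |e^θ t − e^θ z + q| ≤ e^{−Re θ} / (d − ρ) + 1 / cos θ₀. -/
/-!
Write `w = e^θ (t - z) + q`. Pairing `w` with `conj e^θ` gives the single lower bound
`‖w‖ ≥ e^{Re θ} Re (t - z) + q cos (Im θ)`, both of whose terms are nonnegative here.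
Keeping only the first term gives `‖w‖ ≥ e^{Re θ} (d - ρ)`, which controls `1 / ‖w‖`;
keeping only the second gives `‖w‖ ≥ q cos θ₀`, which controls `q / ‖w‖`.
-/

open Complex ComplexConjugate

theorem Complex.normSq_mul_re_add_mul_re_le (a s : ℂ) (q : ℝ) :
    normSq a * s.re + q * a.re ≤ ‖a‖ * ‖a * s + q‖ :=
  calc normSq a * s.re + q * a.re = (conj a * (a * s + q)).re := by
        simp only [mul_add, ← mul_assoc, mul_comm (conj a) a, mul_conj, add_re, re_ofReal_mul,
          re_mul_ofReal, conj_re]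
        ring
    _ ≤ ‖conj a * (a * s + q)‖ := re_le_norm _
    _ = ‖a‖ * ‖a * s + q‖ := by rw [norm_mul, norm_conj]

theorem Complex.exp_re_mul_re_add_mul_cos_im_le (θ s : ℂ) (q : ℝ) :
    Real.exp θ.re * s.re + q * Real.cos θ.im ≤ ‖exp θ * s + q‖ := by
  have h := normSq_mul_re_add_mul_re_le (exp θ) s q
  rw [normSq_eq_norm_sq, norm_exp, exp_re] at h
  refine le_of_mul_le_mul_left ?_ (Real.exp_pos θ.re)
  linarith

theorem add_one_div_le_one_div_add_one_div {a b q x : ℝ} (ha : 0 < a) (hb : 0 < b)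
    (hax : a ≤ x) (hbx : q * b ≤ x) : (q + 1) / x ≤ 1 / a + 1 / b := by
  have hx : 0 < x := ha.trans_le hax
  rw [add_div, add_comm (1 / a)]
  refine add_le_add ?_ (one_div_le_one_div_of_le ha hax)
  rw [div_le_div_iff₀ hx hb]
  linarith

theorem resolvent_bound_ground_state_general
    (d ρ θ₀ : ℝ) (hd : ρ < d)
    (hθ₀ : θ₀ ∈ Set.Ioo 0 (Real.pi / 2))
    (θ : ℂ) (hθ : |θ.im| ≤ θ₀)
    (z : ℂ) (hz : ‖z‖ < ρ) :
    ∀ t : ℝ, d ≤ t → ∀ q : ℝ, 0 ≤ q →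
      Complex.exp θ * (t : ℂ) - Complex.exp θ * z + (q : ℂ) ≠ 0 ∧
      (q + 1) / ‖Complex.exp θ * (t : ℂ) - Complex.exp θ * z + (q : ℂ)‖
        ≤ Real.exp (-θ.re) / (d - ρ) + 1 / Real.cos θ₀ := by
  intro t ht q hq
  obtain ⟨hθ₀_pos, hθ₀_lt⟩ := hθ₀
  have hcos_pos : 0 < Real.cos θ₀ := Real.cos_pos_of_mem_Ioo ⟨by linarith, hθ₀_lt⟩
  have hcos_le : Real.cos θ₀ ≤ Real.cos θ.im := by
    rw [← Real.cos_abs θ.im]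
    exact Real.cos_le_cos_of_nonneg_of_le_pi (abs_nonneg _) (by linarith [Real.pi_pos]) hθ
  have hre : d - ρ ≤ ((t : ℂ) - z).re := by
    simp only [sub_re, ofReal_re]
    linarith [(re_le_norm z).trans hz.le]
  have hw : exp θ * t - exp θ * z + q = exp θ * (t - z) + q := by ring
  have hlower := exp_re_mul_re_add_mul_cos_im_le θ ((t : ℂ) - z) q
  have hexp_pos := Real.exp_pos θ.re
  have hA : Real.exp θ.re * (d - ρ) ≤ ‖exp θ * (t - z) + q‖ := by nlinarith
  have hB : q * Real.cos θ₀ ≤ ‖exp θ * (t - z) + q‖ := by nlinarith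
  have hA_pos : 0 < Real.exp θ.re * (d - ρ) := mul_pos hexp_pos (sub_pos.mpr hd)
  rw [hw]
  refine ⟨norm_pos_iff.mp (hA_pos.trans_le hA), ?_⟩
  convert add_one_div_le_one_div_add_one_div hA_pos hcos_pos hA hB using 2
  rw [Real.exp_neg, one_div, mul_inv, div_eq_mul_inv]

/-- resolvent bound, ground state case. For `d > ρ > 0`,
`θ₀ ∈ (0, π/2)`, `|Im θ| ≤ θ₀` and `|z| < ρ`, one has for all `t ≥ d` and `q ≥ 0` that
`e^θ t - e^θ z + q ≠ 0` and `(q+1)/|e^θ t - e^θ z + q| ≤ e^{-Re θ}/(d-ρ) + 1/cos θ₀`. -/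
theorem resolvent_bound_ground_state
    (d ρ θ₀ : ℝ) (hρ : 0 < ρ) (hd : ρ < d)
    (hθ₀ : θ₀ ∈ Set.Ioo 0 (Real.pi / 2))
    (θ : ℂ) (hθ : |θ.im| ≤ θ₀)
    (z : ℂ) (hz : ‖z‖ < ρ) :
    ∀ t : ℝ, d ≤ t → ∀ q : ℝ, 0 ≤ q →
      Complex.exp θ * (t : ℂ) - Complex.exp θ * z + (q : ℂ) ≠ 0 ∧
      (q + 1) / ‖Complex.exp θ * (t : ℂ) - Complex.exp θ * z + (q : ℂ)‖
        ≤ Real.exp (-θ.re) / (d - ρ) + 1 / Real.cos θ₀ :=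
  resolvent_bound_ground_state_general d ρ θ₀ hd hθ₀ θ hθ z hz
end

section
/- Let d > ρ > 0 and let θ ∈ ℂ with Im θ ∈ (0, π/2), and z ∈ ℂ with |z| ≤ ρ sin(Im θ). Then for every real t ≥ d and every real q one has | −e^θ t − e^θ z + q | ≥ e^{Re θ} sin(Im θ) (d − ρ) > 0. -/
/-!
The imaginary part alone gives the bound: `Im(-e^θ t) = -e^{Re θ} sin(Im θ) t` is at most
`-e^{Re θ} sin(Im θ) d`, the perturbation `e^θ z` moves the imaginary part by at most
`e^{Re θ} ρ sin(Im θ)`, and adding a real `q` does not change it.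
-/

namespace Complex

lemma im_mul_ofReal_sub_norm_mul_le_norm (c z : ℂ) (t q : ℝ) :
    c.im * t - ‖c * z‖ ≤ ‖-c * t - c * z + q‖ := by
  have hcz : -‖c * z‖ ≤ (c * z).im := (neg_le_neg (abs_im_le_norm _)).trans (neg_abs_le _)
  have him : (-c * t - c * z + q).im = -(c.im * t) - (c * z).im := by
    simp only [add_im, sub_im, im_mul_ofReal, neg_im, ofReal_im, add_zero, neg_mul]
  calc c.im * t - ‖c * z‖ ≤ -(-c * t - c * z + q).im := by rw [him]; linarith
    _ ≤ ‖-c * t - c * z + q‖ := (neg_le_abs _).trans (abs_im_le_norm _)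

end Complex

theorem resolvent_bound_resonance_general
    (d ρ : ℝ) (hd : ρ < d)
    (θ : ℂ) (hθ : θ.im ∈ Set.Ioo 0 (Real.pi / 2))
    (z : ℂ) (hz : ‖z‖ ≤ ρ * Real.sin θ.im) :
    ∀ t : ℝ, d ≤ t → ∀ q : ℝ,
      Real.exp θ.re * Real.sin θ.im * (d - ρ)
          ≤ ‖-(Complex.exp θ) * (t : ℂ) - Complex.exp θ * z + (q : ℂ)‖ ∧
        0 < Real.exp θ.re * Real.sin θ.im * (d - ρ) := by
  intro t ht q
  have hsin : 0 < Real.sin θ.im :=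
    Real.sin_pos_of_pos_of_lt_pi hθ.1 (hθ.2.trans (by linarith [Real.pi_pos]))
  have hexp := Real.exp_pos θ.re
  have hcz : ‖Complex.exp θ * z‖ ≤ Real.exp θ.re * (ρ * Real.sin θ.im) := by
    rw [norm_mul, Complex.norm_exp]
    exact mul_le_mul_of_nonneg_left hz hexp.le
  have hdt : Real.exp θ.re * Real.sin θ.im * d ≤ Real.exp θ.re * Real.sin θ.im * t :=
    mul_le_mul_of_nonneg_left ht (by positivity)
  refine ⟨?_, mul_pos (mul_pos hexp hsin) (sub_pos.mpr hd)⟩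
  calc Real.exp θ.re * Real.sin θ.im * (d - ρ)
      ≤ (Complex.exp θ).im * t - ‖Complex.exp θ * z‖ := by
        rw [Complex.exp_im]; linarith
    _ ≤ _ := Complex.im_mul_ofReal_sub_norm_mul_le_norm _ z t q

/-- resolvent bound, resonance case. For `d > ρ > 0`,
`Im θ ∈ (0, π/2)` and `|z| ≤ ρ sin(Im θ)`, one has for all `t ≥ d` and all real `q` that
`|-e^θ t - e^θ z + q| ≥ e^{Re θ} sin(Im θ) (d - ρ) > 0`. -/
theorem resolvent_bound_resonance
    (d ρ : ℝ) (hρ : 0 < ρ) (hd : ρ < d)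
    (θ : ℂ) (hθ : θ.im ∈ Set.Ioo 0 (Real.pi / 2))
    (z : ℂ) (hz : ‖z‖ ≤ ρ * Real.sin θ.im) :
    ∀ t : ℝ, d ≤ t → ∀ q : ℝ,
      Real.exp θ.re * Real.sin θ.im * (d - ρ)
          ≤ ‖-(Complex.exp θ) * (t : ℂ) - Complex.exp θ * z + (q : ℂ)‖ ∧
        0 < Real.exp θ.re * Real.sin θ.im * (d - ρ) :=
  resolvent_bound_resonance_general d ρ hd θ hθ z hz
end
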